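/- arXiv:1207.0954 — 2 statements merged into one kernel-verified Lean document; each statement's English description precedes it below -/
import Mathlib

section
/- Suppose Q is large enough that σ_Q^{-1/n} A ⊂ (0,1]^n. Then for any x ∈ R^n, the number of Farey points of level Q in the translated scaled set x + σ_Q^{-1/n} A + Z^n modulo Z^n equals the number of primitive integer vectors m ∈ Ẑ^{n+1} with m·h(x)·a(Q) ∈ C(A). -/
open Matrix Pointwise

noncomputable def zetaR (s : ℕ) : ℝ := ∑' k : ℕ, (1 : ℝ) / (k + 1) ^ s

noncomputable def sigma (n : ℕ) (Q : ℝ) : ℝ := Q ^ (n + 1) / ((n + 1) * zetaR (n + 1))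

def FareySet (n Q : ℕ) : Set (Fin n → ℝ) :=
  {x | ∃ (p : Fin n → ℤ) (q : ℤ), 0 < q ∧ q ≤ Q ∧
    Finset.univ.gcd (Fin.snoc p q : Fin (n + 1) → ℤ) = 1 ∧
    (∀ i, x i = p i / q) ∧ (∀ i, 0 ≤ x i ∧ x i < 1)}

noncomputable def hMat (n : ℕ) (x : Fin n → ℝ) : Matrix (Fin (n + 1)) (Fin (n + 1)) ℝ :=
  (Matrix.fromBlocks (1 : Matrix (Fin n) (Fin n) ℝ) 0
      (Matrix.of fun _ j => -x j : Matrix (Fin 1) (Fin n) ℝ)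
      (1 : Matrix (Fin 1) (Fin 1) ℝ)).submatrix
    finSumFinEquiv.symm finSumFinEquiv.symm

noncomputable def aMat (n : ℕ) (y : ℝ) : Matrix (Fin (n + 1)) (Fin (n + 1)) ℝ :=
  (Matrix.fromBlocks (y ^ ((1 : ℝ) / n) • (1 : Matrix (Fin n) (Fin n) ℝ)) 0 0
      (y⁻¹ • (1 : Matrix (Fin 1) (Fin 1) ℝ))).submatrix
    finSumFinEquiv.symm finSumFinEquiv.symm

noncomputable def Cone (n : ℕ) (A : Set (Fin n → ℝ)) : Set (Fin (n + 1) → ℝ) :=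
  {v | 0 < v (Fin.last n) ∧ v (Fin.last n) ≤ 1 ∧
    (fun i : Fin n => v i.castSucc) ∈
      ((sigma n 1) ^ (-(1 : ℝ) / n) * v (Fin.last n)) • A}

/-!
Write a Farey point as `p / q` in lowest terms with `0 < q ≤ Q`. Its translates lying in
`x + σ_Q^{-1/n} A` are the points `(p + q k) / q`, `k ∈ ℤ^n`, and `(p + q k, q)` is again primitive.
Computing `m · h(x) · a(Q)` shows that a primitive `m` lands in `C(A)` exactly when its last
coordinate lies in `(0, Q]` and its dehomogenization `m' / q` lies in `x + σ_Q^{-1/n} A`; the scalings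
match because `σ_Q = Q^{n+1} σ_1`. Reducing `m' / q` modulo `ℤ^n` recovers the Farey point, and this
is injective: `x + σ_Q^{-1/n} A` lies in the fundamental domain `x + (0, 1]^n`, and a primitive vector
with positive last coordinate is determined by its dehomogenization.
-/

lemma zetaR_nonneg (s : ℕ) : 0 ≤ zetaR s :=
  tsum_nonneg fun _ => by positivity

lemma sigma_eq_pow_mul_sigma_one (n : ℕ) (Q : ℝ) : sigma n Q = Q ^ (n + 1) * sigma n 1 := by
  simp only [sigma, one_pow]
  ring

lemma rpow_one_div_mul_sigma_rpow {n : ℕ} (hn : n ≠ 0) {Q : ℝ} (hQ : 0 < Q) :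
    Q ^ ((1 : ℝ) / n) * sigma n Q ^ (-(1 : ℝ) / n) = sigma n 1 ^ (-(1 : ℝ) / n) / Q := by
  have hσ : 0 ≤ sigma n 1 :=
    div_nonneg (by positivity) (by have := zetaR_nonneg (n + 1); positivity)
  have hexp : (1 : ℝ) / n + (n + 1 : ℕ) * (-(1 : ℝ) / n) = -1 := by
    push_cast
    field_simp
    ring
  rw [sigma_eq_pow_mul_sigma_one, Real.mul_rpow (by positivity) hσ, ← Real.rpow_natCast,
    ← Real.rpow_mul hQ.le, ← mul_assoc, ← Real.rpow_add hQ, hexp, Real.rpow_neg_one]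
  ring

lemma vecMul_hMat (n : ℕ) (x : Fin n → ℝ) (c : Fin (n + 1) → ℝ) :
    vecMul c (hMat n x) =
      Fin.snoc (fun j => c j.castSucc - c (Fin.last n) * x j) (c (Fin.last n)) := by
  ext j
  refine Fin.lastCases ?_ (fun i => ?_) j
  · simp [hMat, vecMul, dotProduct, Fin.sum_univ_castSucc]
  · simp [hMat, vecMul, dotProduct, Fin.sum_univ_castSucc, Matrix.one_apply]
    ring

lemma vecMul_aMat (n : ℕ) (y : ℝ) (c : Fin (n + 1) → ℝ) :
    vecMul c (aMat n y) =
      Fin.snoc (fun j => y ^ ((1 : ℝ) / n) * c j.castSucc) (y⁻¹ * c (Fin.last n)) := by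
  ext j
  refine Fin.lastCases ?_ (fun i => ?_) j
  · simp [aMat, vecMul, dotProduct, Fin.sum_univ_castSucc, mul_comm]
  · simp [aMat, vecMul, dotProduct, Fin.sum_univ_castSucc, Matrix.one_apply, mul_comm]

lemma vecMul_hMat_aMat (n : ℕ) (x : Fin n → ℝ) (y : ℝ) (c : Fin (n + 1) → ℝ) :
    vecMul c (hMat n x * aMat n y) =
      Fin.snoc (fun j => y ^ ((1 : ℝ) / n) * (c j.castSucc - c (Fin.last n) * x j))
        (y⁻¹ * c (Fin.last n)) := by
  rw [← vecMul_vecMul, vecMul_hMat, vecMul_aMat]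
  simp only [Fin.snoc_castSucc, Fin.snoc_last]

lemma Finset.gcd_univ_snoc {α : Type*} [CommMonoidWithZero α] [NormalizedGCDMonoid α]
    {n : ℕ} (p : Fin n → α) (q : α) :
    univ.gcd (Fin.snoc p q : Fin (n + 1) → α) = GCDMonoid.gcd q (univ.gcd p) := by
  rw [Fin.univ_castSuccEmb, gcd_cons, Finset.gcd, Finset.gcd, fold_map]
  simp [Function.comp_def]

lemma Finset.gcd_univ_snoc_add_smul {α : Type*} [CommRing α] [NormalizedGCDMonoid α]
    {n : ℕ} (p k : Fin n → α) (q : α) :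
    univ.gcd (Fin.snoc (p + q • k) q : Fin (n + 1) → α) =
      univ.gcd (Fin.snoc p q : Fin (n + 1) → α) := by
  rw [gcd_univ_snoc, gcd_univ_snoc]
  exact gcd_eq_of_dvd_sub fun i _ => by simp

lemma eq_of_fract_eq_of_mem_Ioc {a b c : ℝ} (h : Int.fract a = Int.fract b)
    (ha : a ∈ Set.Ioc c (c + 1)) (hb : b ∈ Set.Ioc c (c + 1)) : a = b := by
  obtain ⟨z, hz⟩ := Int.fract_eq_fract.1 h
  have hz1 : |(z : ℝ)| < 1 := by
    rw [← hz, abs_lt]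
    constructor <;> linarith [ha.1, ha.2, hb.1, hb.2]
  have hz0 : z = 0 := by
    rw [← Int.cast_abs] at hz1
    exact Int.abs_lt_one_iff.1 (by exact_mod_cast hz1)
  rwa [hz0, Int.cast_zero, sub_eq_zero] at hz

noncomputable def dehomogenize {n : ℕ} (m : Fin (n + 1) → ℤ) : Fin n → ℝ :=
  fun j => (m j.castSucc : ℝ) / m (Fin.last n)

lemma dehomogenize_snoc {n : ℕ} (p : Fin n → ℤ) (q : ℤ) :
    dehomogenize (Fin.snoc p q : Fin (n + 1) → ℤ) = fun j => (p j : ℝ) / q := by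
  ext j
  simp [dehomogenize]

lemma eq_of_dehomogenize_eq {n : ℕ} {m m' : Fin (n + 1) → ℤ}
    (hm : Finset.univ.gcd m = 1) (hm' : Finset.univ.gcd m' = 1)
    (hq : 0 < m (Fin.last n)) (hq' : 0 < m' (Fin.last n))
    (h : dehomogenize m = dehomogenize m') : m = m' := by
  have hcross : (fun i => m' (Fin.last n) * m i) = fun i => m (Fin.last n) * m' i := by
    ext i
    refine Fin.lastCases (mul_comm _ _) (fun j => ?_) i
    have hj := congrFun h j
    rw [dehomogenize, dehomogenize, div_eq_div_iff (by positivity) (by positivity)] at hj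
    linear_combination
      (by exact_mod_cast hj : m j.castSucc * m' (Fin.last n) = m' j.castSucc * m (Fin.last n))
  have hlast : m' (Fin.last n) = m (Fin.last n) := by
    simpa [Finset.gcd_mul_left, hm, hm', Int.normalize_of_nonneg, hq.le, hq'.le] using
      congrArg Finset.univ.gcd hcross
  ext i
  exact mul_left_cancel₀ hq.ne' (hlast ▸ congrFun hcross i)

lemma mem_cone_iff {n Q : ℕ} (hn : n ≠ 0) (hQ : 0 < Q) (A : Set (Fin n → ℝ))
    (x : Fin n → ℝ) (m : Fin (n + 1) → ℤ) :
    vecMul (fun i => (m i : ℝ)) (hMat n x * aMat n Q) ∈ Cone n A ↔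
      0 < m (Fin.last n) ∧ m (Fin.last n) ≤ Q ∧
        dehomogenize m ∈ x +ᵥ sigma n Q ^ (-(1 : ℝ) / n) • A := by
  have hQ' : (0 : ℝ) < Q := Nat.cast_pos.2 hQ
  rw [vecMul_hMat_aMat]
  simp only [Cone, Set.mem_ofPred_eq, Fin.snoc_castSucc, Fin.snoc_last]
  rw [mul_pos_iff_of_pos_left (inv_pos.2 hQ'), inv_mul_le_one₀ hQ', Int.cast_pos]
  refine and_congr_right fun hq => and_congr (by exact_mod_cast Iff.rfl) ?_
  set c : ℝ := (Q : ℝ) ^ ((1 : ℝ) / n) * m (Fin.last n)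
  have hc : c ≠ 0 := (mul_pos (Real.rpow_pos_of_pos hQ' _) (Int.cast_pos.2 hq)).ne'
  have hvec : (fun i : Fin n => (Q : ℝ) ^ ((1 : ℝ) / n) *
      ((m i.castSucc : ℝ) - m (Fin.last n) * x i)) = c • (-x +ᵥ dehomogenize m) := by
    ext i
    simp only [c, dehomogenize, Pi.smul_apply, vadd_eq_add, Pi.add_apply, Pi.neg_apply,
      smul_eq_mul]
    field_simp
    ring
  have hscale : sigma n 1 ^ (-(1 : ℝ) / n) * ((Q : ℝ)⁻¹ * m (Fin.last n)) =
      c * sigma n Q ^ (-(1 : ℝ) / n) := by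
    linear_combination (-(m (Fin.last n) : ℝ)) * rpow_one_div_mul_sigma_rpow hn hQ'
  rw [hvec, hscale, mul_smul, Set.smul_mem_smul_set_iff₀ hc, Set.mem_vadd_set_iff_neg_vadd_mem]

def primitiveLifts (n Q : ℕ) (T : Set (Fin n → ℝ)) : Set (Fin (n + 1) → ℤ) :=
  {m | Finset.univ.gcd m = 1 ∧ 0 < m (Fin.last n) ∧ m (Fin.last n) ≤ Q ∧ dehomogenize m ∈ T}

lemma setOf_primitive_vecMul_mem_cone_eq {n Q : ℕ} (hn : n ≠ 0) (hQ : 0 < Q)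
    (A : Set (Fin n → ℝ)) (x : Fin n → ℝ) :
    {m : Fin (n + 1) → ℤ | m ≠ 0 ∧ Finset.univ.gcd m = 1 ∧
        vecMul (fun i => (m i : ℝ)) (hMat n x * aMat n Q) ∈ Cone n A} =
      primitiveLifts n Q (x +ᵥ sigma n Q ^ (-(1 : ℝ) / n) • A) := by
  ext m
  simp only [Set.mem_ofPred_eq, mem_cone_iff hn hQ, primitiveLifts]
  constructor
  · exact fun ⟨_, h⟩ => h
  · exact fun h => ⟨fun h0 => by simp [h0] at h, h⟩

lemma injOn_fract_dehomogenize {n : ℕ} (Q : ℕ) {T : Set (Fin n → ℝ)} (x : Fin n → ℝ)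
    (hT : T ⊆ Set.univ.pi fun j => Set.Ioc (x j) (x j + 1)) :
    Set.InjOn (fun m j => Int.fract (dehomogenize m j)) (primitiveLifts n Q T) := by
  rintro m ⟨hm, hq, -, hmT⟩ m' ⟨hm', hq', -, hmT'⟩ hfract
  refine eq_of_dehomogenize_eq hm hm' hq hq' (funext fun j => ?_)
  exact eq_of_fract_eq_of_mem_Ioc (congrFun hfract j) (hT hmT j trivial) (hT hmT' j trivial)

lemma fract_dehomogenize_snoc_add_smul {n : ℕ} (p k : Fin n → ℤ) {q : ℤ} (hq : q ≠ 0)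
    (hp : ∀ j, (p j : ℝ) / q ∈ Set.Ico 0 1) :
    (fun j => Int.fract (dehomogenize (Fin.snoc (p + q • k) q : Fin (n + 1) → ℤ) j)) =
      fun j => (p j : ℝ) / q := by
  ext j
  have hshift : ((p j + q * k j : ℤ) : ℝ) / q = p j / q + k j := by
    push_cast
    field_simp
  simp only [dehomogenize_snoc, Pi.add_apply, Pi.smul_apply, smul_eq_mul, hshift,
    Int.fract_add_intCast, Int.fract_eq_self.2 (hp j)]

lemma image_fract_dehomogenize (n Q : ℕ) (T : Set (Fin n → ℝ)) :
    (fun m j => Int.fract (dehomogenize m j)) '' primitiveLifts n Q T =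
      {r | r ∈ FareySet n Q ∧ ∃ k : Fin n → ℤ, (fun i => r i + k i) ∈ T} := by
  ext r
  constructor
  · rintro ⟨m, ⟨hm, hq, hqQ, hmT⟩, rfl⟩
    set q := m (Fin.last n)
    set k : Fin n → ℤ := fun j => ⌊dehomogenize m j⌋
    set p : Fin n → ℤ := Fin.init m - q • k
    have hm_eq : m = Fin.snoc (p + q • k) q := by
      ext i
      refine Fin.lastCases ?_ (fun j => ?_) i <;> simp [p, q, Fin.init]
    refine ⟨⟨p, q, hq, hqQ, ?_, fun j => ?_, fun j => ⟨Int.fract_nonneg _, Int.fract_lt_one _⟩⟩,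
      k, ?_⟩
    · rwa [← Finset.gcd_univ_snoc_add_smul p k, ← hm_eq]
    · have hq0 : (q : ℝ) ≠ 0 := by positivity
      simp only [← Int.self_sub_floor, p, k, Pi.sub_apply, Pi.smul_apply, smul_eq_mul, Fin.init]
      push_cast
      rw [sub_div, mul_div_cancel_left₀ _ hq0]
      rfl
    · simpa only [k, Int.fract_add_floor] using hmT
  · rintro ⟨⟨p, q, hq, hqQ, hpq, hr, hr01⟩, k, hk⟩
    obtain rfl : r = fun j => (p j : ℝ) / q := funext hr
    refine ⟨Fin.snoc (p + q • k) q, ⟨?_, by simpa using hq, by simpa using hqQ, ?_⟩,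
      fract_dehomogenize_snoc_add_smul p k hq.ne' hr01⟩
    · rwa [Finset.gcd_univ_snoc_add_smul]
    · convert hk using 1
      ext j
      simp only [dehomogenize_snoc, Pi.add_apply, Pi.smul_apply, smul_eq_mul]
      push_cast
      field_simp

lemma vadd_subset_pi_Ioc {n : ℕ} {S : Set (Fin n → ℝ)} (x : Fin n → ℝ)
    (hS : S ⊆ {y : Fin n → ℝ | ∀ i, 0 < y i ∧ y i ≤ 1}) :
    x +ᵥ S ⊆ Set.univ.pi fun j => Set.Ioc (x j) (x j + 1) := by
  rintro _ ⟨s, hs, rfl⟩ j -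
  have := hS hs j
  simp only [vadd_eq_add, Pi.add_apply, Set.mem_Ioc]
  constructor <;> linarith [this.1, this.2]

/-- if σ_Q^{-1/n}A ⊂ (0,1]^n then the number of Farey points of level Q in
x + σ_Q^{-1/n}A + ℤ^n equals the number of primitive integer vectors m ∈ Ẑ^{n+1} with
m·h(x)·a(Q) ∈ C(A). -/
theorem farey_counting_identity (n Q : ℕ) (hn : 1 ≤ n) (hQpos : 1 ≤ Q)
    (A : Set (Fin n → ℝ)) (x : Fin n → ℝ)
    (hQ : (sigma n Q) ^ (-(1 : ℝ) / n) • A ⊆ {y : Fin n → ℝ | ∀ i, 0 < y i ∧ y i ≤ 1}) :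
    {r | r ∈ FareySet n Q ∧
        ∃ m : Fin n → ℤ, (fun i => r i + m i) ∈ x +ᵥ ((sigma n Q) ^ (-(1 : ℝ) / n) • A)}.ncard =
      {m : Fin (n + 1) → ℤ | m ≠ 0 ∧ Finset.univ.gcd m = 1 ∧
        Matrix.vecMul (fun i => (m i : ℝ)) (hMat n x * aMat n (Q : ℝ)) ∈ Cone n A}.ncard := by
  rw [setOf_primitive_vecMul_mem_cone_eq (by omega) hQpos, ← image_fract_dehomogenize,
    (injOn_fract_dehomogenize Q x (vadd_subset_pi_Ioc x hQ)).ncard_image]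
end

section
/- Let n=1, s > 0, λ ∈ (0,1], a = 3/(π²s), y = λ^{1/2}, and Δ = {(x₁,x₂) ∈ R² : 0 < x₁ ≤ (π²/3) x₂ λ s, 0 < x₂ ≤ λ^{-1/2}}. Then the Lebesgue measure of the set of x ∈ [0,1) such that no primitive integer vector (p,q) satisfies (p, px+q) ∈ Δ equals: 1 if y ≤ a; 1 − 1/y + a/y² if a < y ≤ a(1−y)^{-1}; and 0 if y > a(1−y)^{-1}. -/
open MeasureTheory

/-- The triangle Δ_{s,λ} = {(x₁,x₂) : 0 < x₁ ≤ (π²/3)x₂λs, 0 < x₂ ≤ λ^{-1/2}}. -/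
def Triangle (s lam : ℝ) : Set (ℝ × ℝ) :=
  {v | 0 < v.1 ∧ v.1 ≤ Real.pi ^ 2 / 3 * v.2 * lam * s ∧ 0 < v.2 ∧ v.2 ≤ (Real.sqrt lam)⁻¹}

/-!
Write `α = a / λ` and `β = λ^{-1/2}`, so that `(p, p x + q) ∈ Δ` means `0 < p` and
`p α ≤ p x + q ≤ β`. Since `β ≥ 1`, such a `(p, q)` exists (primitive or not) iff one exists with
`p = 1`: `k = ⌈q / p⌉` gives `x + k ≥ α` and `p (x + k) ≤ p x + q + p - 1 ≤ p β`.
So the good set is the `ℤ`-periodization of `[α, β]`, whose trace on a period has measure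
`min (max (β - α) 0) 1`; the three cases of the formula are `β ≤ α`, `0 < β - α ≤ 1` and `β - α > 1`.
-/

def periodizedIcc (α β : ℝ) : Set ℝ :=
  {x | ∃ k : ℤ, α ≤ x + k ∧ x + k ≤ β}

section periodizedIcc

variable {α β : ℝ}

theorem measurableSet_periodizedIcc : MeasurableSet (periodizedIcc α β) := by
  have : periodizedIcc α β = ⋃ k : ℤ, (· + (k : ℝ)) ⁻¹' Set.Icc α β := by
    ext x; simp [periodizedIcc, le_sub_iff_add_le]
  rw [this]
  exact MeasurableSet.iUnion fun k => measurableSet_Icc.preimage (measurable_add_const _)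

theorem int_add_mem_periodizedIcc_iff (n : ℤ) (x : ℝ) :
    (n : ℝ) + x ∈ periodizedIcc α β ↔ x ∈ periodizedIcc α β := by
  constructor
  · rintro ⟨k, hk₁, hk₂⟩
    exact ⟨n + k, by push_cast; linarith, by push_cast; linarith⟩
  · rintro ⟨k, hk₁, hk₂⟩
    exact ⟨k - n, by push_cast; linarith, by push_cast; linarith⟩

-- On the period `(β - 1, β]` only the translates `x + k` with `k ≤ 0` can land in `[α, β]`.
theorem volume_periodizedIcc_inter_Ioc (hαβ : β - α ≤ 1) :
    volume (periodizedIcc α β ∩ Set.Ioc 0 1) = ENNReal.ofReal (β - α) := by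
  have hinv : ∀ g : AddSubgroup.zmultiples (1 : ℝ),
      (g +ᵥ ·) ⁻¹' periodizedIcc α β = periodizedIcc α β := by
    rintro ⟨g, n, rfl⟩
    ext x
    simpa using int_add_mem_periodizedIcc_iff n x
  have hshift := (isAddFundamentalDomain_Ioc one_pos 0).measure_set_eq
    (isAddFundamentalDomain_Ioc one_pos (β - 1)) measurableSet_periodizedIcc hinv
  rw [zero_add, sub_add_cancel] at hshift
  have hlower : Set.Ioo α β ⊆ periodizedIcc α β ∩ Set.Ioc (β - 1) β := by
    rintro x ⟨hx₁, hx₂⟩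
    exact ⟨⟨0, by simp; linarith, by simp; linarith⟩, by linarith, hx₂.le⟩
  have hupper : periodizedIcc α β ∩ Set.Ioc (β - 1) β ⊆ Set.Icc α β := by
    rintro x ⟨⟨k, hk₁, hk₂⟩, hx₁, hx₂⟩
    have hk : (k : ℝ) ≤ 0 := by
      have : (k : ℝ) < 1 := by linarith
      exact_mod_cast Int.lt_add_one_iff.mp (by exact_mod_cast this)
    exact ⟨by linarith, hx₂⟩
  refine hshift ▸ le_antisymm ?_ ?_
  · simpa using measure_mono (μ := volume) hupper
  · simpa using measure_mono (μ := volume) hlower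

theorem periodizedIcc_eq_univ (hαβ : 1 ≤ β - α) : periodizedIcc α β = Set.univ := by
  refine Set.eq_univ_of_forall fun x => ⟨⌈α - x⌉, ?_, ?_⟩
  · linarith [Int.le_ceil (α - x)]
  · linarith [Int.ceil_lt_add_one (α - x)]

theorem toReal_volume_Ico_diff_periodizedIcc (hαβ : β - α ≤ 1) :
    (volume (Set.Ico 0 1 \ periodizedIcc α β)).toReal = 1 - max (β - α) 0 := by
  have hIco : volume (Set.Ico 0 1 \ periodizedIcc α β) =
      volume (Set.Ioc 0 1 \ periodizedIcc α β) :=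
    measure_congr (Ico_ae_eq_Ioc.diff (ae_eq_refl _))
  have hsplit := measure_inter_add_sdiff (μ := volume) (Set.Ioc (0 : ℝ) 1)
    (measurableSet_periodizedIcc (α := α) (β := β))
  rw [Set.inter_comm, volume_periodizedIcc_inter_Ioc hαβ, Real.volume_Ioc] at hsplit
  have hfin : volume (Set.Ioc 0 1 \ periodizedIcc α β) ≠ ⊤ :=
    measure_ne_top_of_subset Set.sdiff_subset (by simp)
  have := congrArg ENNReal.toReal hsplit
  rw [ENNReal.toReal_add ENNReal.ofReal_ne_top hfin, ENNReal.toReal_ofReal',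
    ENNReal.toReal_ofReal (by norm_num)] at this
  rw [hIco]
  linarith

theorem mem_periodizedIcc_of_int_mul (hβ : 1 ≤ β) {p q : ℤ} (hp : 0 < p) {x : ℝ}
    (h₁ : α * p ≤ p * x + q) (h₂ : p * x + q ≤ β) : x ∈ periodizedIcc α β := by
  have hpR : (0 : ℝ) < p := by exact_mod_cast hp
  set k := ⌈(q : ℝ) / p⌉
  have hk₁ : (q : ℝ) ≤ p * k := by
    have := Int.le_ceil ((q : ℝ) / p)
    rwa [div_le_iff₀ hpR, mul_comm] at this
  have hk₂ : (p : ℝ) * k ≤ q + p - 1 := by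
    have : (p : ℝ) * k < q + p := by
      have := Int.ceil_lt_add_one ((q : ℝ) / p)
      rw [← sub_lt_iff_lt_add, lt_div_iff₀ hpR] at this
      linarith
    have : p * k < q + p := by exact_mod_cast this
    exact_mod_cast (show p * k ≤ q + p - 1 by omega)
  refine ⟨k, le_of_mul_le_mul_left ?_ hpR, le_of_mul_le_mul_left ?_ hpR⟩
  · linarith
  · nlinarith

theorem exists_coprime_iff_mem_periodizedIcc (hβ : 1 ≤ β) (x : ℝ) :
    (∃ p q : ℤ, Int.gcd p q = 1 ∧ 0 < p ∧ α * p ≤ p * x + q ∧ p * x + q ≤ β) ↔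
      x ∈ periodizedIcc α β := by
  constructor
  · rintro ⟨p, q, -, hp, h₁, h₂⟩
    exact mem_periodizedIcc_of_int_mul hβ hp h₁ h₂
  · rintro ⟨k, hk₁, hk₂⟩
    exact ⟨1, k, Int.one_gcd, one_pos, by simpa [add_comm] using hk₁, by simpa [add_comm] using hk₂⟩

end periodizedIcc

theorem mem_Triangle_iff {s lam : ℝ} (hs : 0 < s) (hlam : 0 < lam) (v : ℝ × ℝ) :
    v ∈ Triangle s lam ↔
      0 < v.1 ∧ 3 / (Real.pi ^ 2 * s) / lam * v.1 ≤ v.2 ∧ v.2 ≤ (Real.sqrt lam)⁻¹ := by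
  have hc : 0 < 3 / (Real.pi ^ 2 * s) / lam := by positivity
  have hscale : Real.pi ^ 2 / 3 * v.2 * lam * s = v.2 / (3 / (Real.pi ^ 2 * s) / lam) := by
    field_simp
  simp only [Triangle, Set.mem_ofPred_eq, hscale, le_div_iff₀ hc, mul_comm v.1]
  constructor
  · rintro ⟨h₁, h₂, -, h₃⟩
    exact ⟨h₁, h₂, h₃⟩
  · rintro ⟨h₁, h₂, h₃⟩
    exact ⟨h₁, h₂, lt_of_lt_of_le (by positivity) h₂, h₃⟩

/-- with a = 3/(π²s), y = λ^{1/2}, the measure of the set of x ∈ [0,1) with no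
primitive (p,q) ∈ ℤ² satisfying (p, px+q) ∈ Δ_{s,λ} equals 1 if y ≤ a; 1 − 1/y + a/y² if
a < y ≤ a(1−y)^{-1} (i.e. y(1−y) ≤ a); and 0 if y > a(1−y)^{-1}. -/
theorem hall_measure_formula (s lam : ℝ) (hs : 0 < s) (hlam0 : 0 < lam) (hlam1 : lam ≤ 1) :
    (volume {x ∈ Set.Ico (0 : ℝ) 1 |
        ¬∃ p q : ℤ, Int.gcd p q = 1 ∧ ((p : ℝ), p * x + q) ∈ Triangle s lam}).toReal =
      (let a := 3 / (Real.pi ^ 2 * s); let y := Real.sqrt lam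
        if y ≤ a then 1
        else if y * (1 - y) ≤ a then 1 - 1 / y + a / y ^ 2
        else 0) := by
  have hβ : 1 ≤ (Real.sqrt lam)⁻¹ :=
    (one_le_inv₀ (Real.sqrt_pos.2 hlam0)).2 (Real.sqrt_le_one.2 hlam1)
  have hset : {x ∈ Set.Ico (0 : ℝ) 1 |
      ¬∃ p q : ℤ, Int.gcd p q = 1 ∧ ((p : ℝ), p * x + q) ∈ Triangle s lam} =
      Set.Ico 0 1 \ periodizedIcc (3 / (Real.pi ^ 2 * s) / lam) (Real.sqrt lam)⁻¹ := by
    ext x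
    simp only [Set.mem_ofPred_eq, Set.mem_sdiff, mem_Triangle_iff hs hlam0, Int.cast_pos,
      exists_coprime_iff_mem_periodizedIcc hβ]
  rw [hset]
  dsimp only
  set a := 3 / (Real.pi ^ 2 * s)
  set y := Real.sqrt lam
  rw [show a / lam = a / y ^ 2 by rw [Real.sq_sqrt hlam0.le]]
  have hy : 0 < y := Real.sqrt_pos.2 hlam0
  have hlen : y⁻¹ - a / y ^ 2 = (y - a) / y ^ 2 := by field_simp
  have hlen_sub_one : y⁻¹ - a / y ^ 2 - 1 = (y * (1 - y) - a) / y ^ 2 := by field_simp; ring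
  split_ifs with h₁ h₂
  · have : y⁻¹ - a / y ^ 2 ≤ 0 := hlen ▸ div_nonpos_of_nonpos_of_nonneg (by linarith) (by positivity)
    rw [toReal_volume_Ico_diff_periodizedIcc (by linarith), max_eq_right this, sub_zero]
  · have hnonneg : 0 ≤ y⁻¹ - a / y ^ 2 := hlen ▸ div_nonneg (by linarith) (by positivity)
    have hle : y⁻¹ - a / y ^ 2 - 1 ≤ 0 :=
      hlen_sub_one ▸ div_nonpos_of_nonpos_of_nonneg (by linarith) (by positivity)
    rw [toReal_volume_Ico_diff_periodizedIcc (by linarith), max_eq_left hnonneg]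
    ring
  · have : 0 < y⁻¹ - a / y ^ 2 - 1 := hlen_sub_one ▸ div_pos (by linarith) (by positivity)
    rw [periodizedIcc_eq_univ (by linarith), Set.sdiff_univ, measure_empty, ENNReal.toReal_zero]
end
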